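/- Let h > 0, k > 0, and let V ∈ L¹(ℝ³) be supported in { y ∈ ℝ³ : y₃ ≤ −h }. For ξ ∈ ℝ² define the complex number η₃(ξ) = √(1 − |ξ|²) if |ξ| ≤ 1 and η₃(ξ) = i·√(|ξ|² − 1) if |ξ| > 1, and write η⁺ = (η′, η₃(η′)), η̃⁻ = (η̃′, −η₃(η̃′)). Then ∫_{ℝ²} ∫_{ℝ²} | ∫_{ℝ³} e^{i k (η̃⁻ − η⁺)·y} V(y) d³y |² · √(|1 − |η̃′|²|) / √(|1 − |η′|²|) d²η̃′ d²η′ < ∞. That is, the Born term of the fixed-frequency scattering operator has finite Hilbert–Schmidt norm on the weighted space L²_g. -/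

import Mathlib

/-!
Since `V` lives in `{y₃ ≤ −h}` and `Im η₃ = γ ≥ 0`, the Born amplitude is bounded by
`e^{−kh(γ(η′)+γ(η̃′))} ‖V‖₁ ≤ e^{kh(2 − |η′| − |η̃′|)} ‖V‖₁`. The integrand is therefore dominated
by a product `p(|η′|) q(|η̃′|)` of radial functions with exponential decay. In polar coordinates
`r p(r)` has only the singularity `r / √|1 − r²|` at `r = 1`, which is integrable because it is the
derivative of the continuous function `∓√|1 − r²|` on either side of `1`.
-/

open MeasureTheory

/-- The evanescent decay rate `γ(ξ) = √(|ξ|² − 1)` for `|ξ| > 1`, and `0` otherwise. -/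
noncomputable def gammaEv (ξ : EuclideanSpace ℝ (Fin 2)) : ℝ :=
  if 1 < ‖ξ‖ then Real.sqrt (‖ξ‖ ^ 2 - 1) else 0

/-- The (possibly complex) vertical wave number `η₃(ξ) = √(1 − |ξ|²)` for `|ξ| ≤ 1`
and `η₃(ξ) = i·√(|ξ|² − 1)` for `|ξ| > 1`. -/
noncomputable def etaThree (ξ : EuclideanSpace ℝ (Fin 2)) : ℂ :=
  if ‖ξ‖ ≤ 1 then (Real.sqrt (1 - ‖ξ‖ ^ 2) : ℂ) else Complex.I * (gammaEv ξ : ℂ)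

open Set Real

lemma norm_integral_mul_le_of_norm_le {α : Type*} [MeasurableSpace α] {μ : Measure α}
    {f V : α → ℂ} (hV : Integrable V μ) {M : ℝ} (hf : ∀ x, V x ≠ 0 → ‖f x‖ ≤ M) :
    ‖∫ x, f x * V x ∂μ‖ ≤ M * ∫ x, ‖V x‖ ∂μ := by
  rw [← integral_const_mul]
  refine norm_integral_le_of_norm_le (hV.norm.const_mul M) (.of_forall fun x => ?_)
  by_cases hx : V x = 0
  · simp [hx]
  · rw [norm_mul]
    exact mul_le_mul_of_nonneg_right (hf x hx) (norm_nonneg _)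

lemma integrable_comp_norm_iff_integrableOn_mul {f : ℝ → ℝ} :
    Integrable (fun ξ : EuclideanSpace ℝ (Fin 2) => f ‖ξ‖) ↔
      IntegrableOn (fun r => r * f r) (Ioi 0) := by
  simpa using integrable_fun_norm_addHaar (volume : Measure (EuclideanSpace ℝ (Fin 2))) (f := f)

lemma integrableOn_pow_mul_exp_neg_mul (n : ℕ) {c : ℝ} (hc : 0 < c) :
    IntegrableOn (fun r : ℝ => r ^ n * exp (-(c * r))) (Ioi 0) := by
  simpa using integrableOn_rpow_mul_exp_neg_mul_rpow (s := n) (p := 1)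
    (by linarith [n.cast_nonneg (α := ℝ)]) one_pos hc

lemma integrableOn_div_sqrt_abs_one_sub_sq :
    IntegrableOn (fun r : ℝ => r / √|1 - r ^ 2|) (Ioc 0 2) := by
  have below : IntegrableOn (fun r : ℝ => r / √|1 - r ^ 2|) (Ioc 0 1) := by
    refine intervalIntegral.integrableOn_deriv_of_nonneg (g := fun r => -√(1 - r ^ 2))
      (by fun_prop) (fun r hr => ?_) (fun r hr => div_nonneg hr.1.le (sqrt_nonneg _))
    have hpos : 0 < 1 - r ^ 2 := by nlinarith [hr.1, hr.2]
    rw [abs_of_pos hpos]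
    refine (((hasDerivAt_pow 2 r).const_sub 1).sqrt hpos.ne').fun_neg.congr_deriv ?_
    field_simp
    norm_num
  have above : IntegrableOn (fun r : ℝ => r / √|1 - r ^ 2|) (Ioc 1 2) := by
    refine intervalIntegral.integrableOn_deriv_of_nonneg (g := fun r => √(r ^ 2 - 1))
      (by fun_prop) (fun r hr => ?_) (fun r hr => div_nonneg (by linarith [hr.1]) (sqrt_nonneg _))
    have hpos : 0 < r ^ 2 - 1 := by nlinarith [hr.1, hr.2]
    rw [abs_of_neg (by linarith), neg_sub]
    refine (((hasDerivAt_pow 2 r).sub_const 1).sqrt hpos.ne').congr_deriv ?_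
    field_simp
    norm_num
  rw [← Ioc_union_Ioc_eq_Ioc zero_le_one one_le_two]
  exact below.union above

lemma integrableOn_mul_exp_neg_mul_div_sqrt {c : ℝ} (hc : 0 < c) :
    IntegrableOn (fun r : ℝ => r * (exp (-(c * r)) / √|1 - r ^ 2|)) (Ioi 0) := by
  have hmeas : AEStronglyMeasurable (fun r : ℝ => r * (exp (-(c * r)) / √|1 - r ^ 2|)) := by
    fun_prop
  rw [← Ioc_union_Ioi_eq_Ioi zero_le_two]
  refine IntegrableOn.union ?_ ?_
  · refine integrableOn_div_sqrt_abs_one_sub_sq.mono' hmeas.restrict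
      (ae_restrict_of_forall_mem measurableSet_Ioc fun r hr => ?_)
    have hexp : exp (-(c * r)) ≤ 1 := exp_le_one_iff.2 (by nlinarith [hr.1])
    rw [norm_of_nonneg (by have := hr.1.le; positivity), mul_div_assoc']
    gcongr
    exact mul_le_of_le_one_right hr.1.le hexp
  · refine ((integrableOn_pow_mul_exp_neg_mul 1 hc).mono_set (Ioi_subset_Ioi zero_le_two)).mono'
      hmeas.restrict (ae_restrict_of_forall_mem measurableSet_Ioi fun r (hr : 2 < r) => ?_)
    have hsqrt : 1 ≤ √|1 - r ^ 2| := by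
      rw [one_le_sqrt, abs_of_neg (by nlinarith)]; nlinarith
    rw [norm_of_nonneg (by positivity), pow_one]
    gcongr
    exact div_le_self (exp_pos _).le hsqrt

lemma integrableOn_mul_exp_neg_mul_mul_sqrt {c : ℝ} (hc : 0 < c) :
    IntegrableOn (fun r : ℝ => r * (exp (-(c * r)) * √|1 - r ^ 2|)) (Ioi 0) := by
  refine ((integrableOn_pow_mul_exp_neg_mul 1 hc).add
    (integrableOn_pow_mul_exp_neg_mul 2 hc)).mono' (by fun_prop)
    (ae_restrict_of_forall_mem measurableSet_Ioi fun r (hr : 0 < r) => ?_)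
  have hsqrt : √|1 - r ^ 2| ≤ 1 + r :=
    sqrt_le_iff.2 ⟨by linarith, abs_le.2 ⟨by nlinarith, by nlinarith⟩⟩
  rw [norm_of_nonneg (by positivity)]
  calc r * (exp (-(c * r)) * √|1 - r ^ 2|) ≤ r * (exp (-(c * r)) * (1 + r)) := by gcongr
    _ = _ := by simp only [Pi.add_apply]; ring

lemma gammaEv_nonneg (ξ : EuclideanSpace ℝ (Fin 2)) : 0 ≤ gammaEv ξ := by
  unfold gammaEv
  split_ifs <;> positivity

lemma norm_sub_one_le_gammaEv (ξ : EuclideanSpace ℝ (Fin 2)) : ‖ξ‖ - 1 ≤ gammaEv ξ := by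
  unfold gammaEv
  split_ifs with h
  · rw [le_sqrt (by linarith) (by nlinarith)]
    nlinarith
  · linarith [not_lt.1 h]

lemma im_etaThree (ξ : EuclideanSpace ℝ (Fin 2)) : (etaThree ξ).im = gammaEv ξ := by
  unfold etaThree
  split_ifs with h
  · simp [gammaEv, not_lt.2 h]
  · simp

/-- The integral in the Born term `Ŝ_B`, without its prefactor `−ik/(2η₃)`. -/
noncomputable def bornAmplitude (k : ℝ) (V : EuclideanSpace ℝ (Fin 3) → ℂ)
    (η' ηt' : EuclideanSpace ℝ (Fin 2)) : ℂ :=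
  ∫ y : EuclideanSpace ℝ (Fin 3),
    Complex.exp (Complex.I * (k : ℂ) *
      ((((ηt' 0 - η' 0) * y 0 + (ηt' 1 - η' 1) * y 1 : ℝ) : ℂ) +
        (-etaThree ηt' - etaThree η') * (y 2 : ℝ))) * V y

lemma re_bornExponent (k a t : ℝ) (η' ηt' : EuclideanSpace ℝ (Fin 2)) :
    (Complex.I * (k : ℂ) * ((a : ℂ) + (-etaThree ηt' - etaThree η') * (t : ℂ))).re =
      k * ((gammaEv η' + gammaEv ηt') * t) := by
  simp [Complex.mul_re, Complex.mul_im, im_etaThree]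
  ring

lemma norm_bornAmplitude_le {h k : ℝ} (hh : 0 ≤ h) (hk : 0 ≤ k)
    {V : EuclideanSpace ℝ (Fin 3) → ℂ} (hV : Integrable V)
    (hsupp : ∀ y : EuclideanSpace ℝ (Fin 3), V y ≠ 0 → y 2 ≤ -h)
    (η' ηt' : EuclideanSpace ℝ (Fin 2)) :
    ‖bornAmplitude k V η' ηt'‖ ≤ exp (k * h * (2 - ‖η'‖ - ‖ηt'‖)) * ∫ y, ‖V y‖ := by
  refine norm_integral_mul_le_of_norm_le hV fun y hy => ?_
  rw [Complex.norm_exp, re_bornExponent, exp_le_exp]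
  have hγ : ‖η'‖ - 1 + (‖ηt'‖ - 1) ≤ gammaEv η' + gammaEv ηt' :=
    add_le_add (norm_sub_one_le_gammaEv η') (norm_sub_one_le_gammaEv ηt')
  have hdepth : h ≤ -y 2 := by linarith [hsupp y hy]
  have hdecay : h * (‖η'‖ - 1 + (‖ηt'‖ - 1)) ≤ (gammaEv η' + gammaEv ηt') * -y 2 :=
    calc _ ≤ h * (gammaEv η' + gammaEv ηt') := mul_le_mul_of_nonneg_left hγ hh
      _ ≤ _ := by
        rw [mul_comm]
        exact mul_le_mul_of_nonneg_left hdepth (add_nonneg (gammaEv_nonneg _) (gammaEv_nonneg _))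
  nlinarith [mul_le_mul_of_nonneg_left hdecay hk]

lemma norm_bornAmplitude_sq_mul_div_le {h k : ℝ} (hh : 0 ≤ h) (hk : 0 ≤ k)
    {V : EuclideanSpace ℝ (Fin 3) → ℂ} (hV : Integrable V)
    (hsupp : ∀ y : EuclideanSpace ℝ (Fin 3), V y ≠ 0 → y 2 ≤ -h)
    (η' ηt' : EuclideanSpace ℝ (Fin 2)) :
    ‖bornAmplitude k V η' ηt'‖ ^ 2 * √|1 - ‖ηt'‖ ^ 2| / √|1 - ‖η'‖ ^ 2| ≤
      (∫ y, ‖V y‖) ^ 2 * exp (4 * (k * h)) *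
          (exp (-(2 * (k * h) * ‖η'‖)) / √|1 - ‖η'‖ ^ 2|) *
        (exp (-(2 * (k * h) * ‖ηt'‖)) * √|1 - ‖ηt'‖ ^ 2|) := by
  have hexp : exp (k * h * (2 - ‖η'‖ - ‖ηt'‖)) ^ 2 =
      exp (4 * (k * h)) * exp (-(2 * (k * h) * ‖η'‖)) * exp (-(2 * (k * h) * ‖ηt'‖)) := by
    rw [← exp_add, ← exp_add, sq, ← exp_add]
    ring_nf
  calc _ ≤ (exp (k * h * (2 - ‖η'‖ - ‖ηt'‖)) * ∫ y, ‖V y‖) ^ 2 * √|1 - ‖ηt'‖ ^ 2| /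
        √|1 - ‖η'‖ ^ 2| := by
        gcongr
        exact norm_bornAmplitude_le hh hk hV hsupp η' ηt'
    _ = _ := by
        rw [mul_pow, hexp]
        ring

/-- The Born term of the fixed-frequency scattering operator has finite Hilbert–Schmidt
norm on the weighted space `L²_g`: for `V ∈ L¹(ℝ³)` supported in `{y₃ ≤ −h}`,
`∫∫ |∫ e^(ik(η̃⁻ − η⁺)·y) V(y) d³y|² · √(|1 − |η̃′|²|)/√(|1 − |η′|²|) d²η̃′ d²η′ < ∞`,
where `η⁺ = (η′, η₃(η′))` and `η̃⁻ = (η̃′, −η₃(η̃′))`. -/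
theorem stmt14 (h k : ℝ) (hh : 0 < h) (hk : 0 < k)
    (V : EuclideanSpace ℝ (Fin 3) → ℂ) (hV : Integrable V)
    (hsupp : ∀ y : EuclideanSpace ℝ (Fin 3), V y ≠ 0 → y 2 ≤ -h) :
    (∫⁻ η' : EuclideanSpace ℝ (Fin 2), ∫⁻ ηt' : EuclideanSpace ℝ (Fin 2),
        ENNReal.ofReal (
          ‖∫ y : EuclideanSpace ℝ (Fin 3),
              Complex.exp (Complex.I * (k : ℂ) *
                ((((ηt' 0 - η' 0) * y 0 + (ηt' 1 - η' 1) * y 1 : ℝ) : ℂ) +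
                  (-etaThree ηt' - etaThree η') * (y 2 : ℝ))) * V y‖ ^ 2 *
          Real.sqrt |1 - ‖ηt'‖ ^ 2| / Real.sqrt |1 - ‖η'‖ ^ 2|)) < ⊤ := by
  set b := k * h
  set C := ∫ y, ‖V y‖
  have hb : 0 < 2 * b := by positivity
  have hP := (integrable_comp_norm_iff_integrableOn_mul.2
    (integrableOn_mul_exp_neg_mul_div_sqrt hb)).const_mul (C ^ 2 * exp (4 * b))
  have hQ := integrable_comp_norm_iff_integrableOn_mul.2 (integrableOn_mul_exp_neg_mul_mul_sqrt hb)
  calc _ ≤ ∫⁻ η' : EuclideanSpace ℝ (Fin 2), ∫⁻ ηt' : EuclideanSpace ℝ (Fin 2),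
          ENNReal.ofReal (C ^ 2 * exp (4 * b) * (exp (-(2 * b * ‖η'‖)) / √|1 - ‖η'‖ ^ 2|)) *
            ENNReal.ofReal (exp (-(2 * b * ‖ηt'‖)) * √|1 - ‖ηt'‖ ^ 2|) := by
        refine lintegral_mono fun η' => lintegral_mono fun ηt' => ?_
        rw [← ENNReal.ofReal_mul (by positivity)]
        exact ENNReal.ofReal_le_ofReal
          (norm_bornAmplitude_sq_mul_div_le hh.le hk.le hV hsupp η' ηt')
    _ = _ := lintegral_lintegral_mul hP.aemeasurable.ennreal_ofReal hQ.aemeasurable.ennreal_ofReal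
    _ < ⊤ := ENNReal.mul_lt_top hP.lintegral_lt_top hQ.lintegral_lt_top
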